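/- Let k, l ∈ ℕ, let (G,φ) be a J_{16}(k,l)-free ordered graph, and let L be a 3-list-assignment of G. Let X = {v ∈ V(G) : |L(v)| ≥ 2}, and assume that in the subgraph of G induced by X every vertex has at most two forward neighbors (with respect to φ) and that |X| ≥ 3k + 3l + 6. Then there exists a family 𝓛 of 3-list-assignments of G such that: (i) |𝓛| ≤ 3^{3k+3l+6}; (ii) for every L* ∈ 𝓛 and every vertex v, L*(v) ⊆ L(v); (iii) for every L* ∈ 𝓛, the subgraph of G induced by {v ∈ V(G) : |L*(v)| ≥ 2} is chordal; and (iv) for every L-coloring c of G there exists L* ∈ 𝓛 such that c is an L*-coloring of G. -/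

import Mathlib

/-- An ordered graph `(G, φ)` is `J₁₆(k, l)`-free: there are no `k + l + 3` distinct
vertices `a 0 < ⋯ < a (k-1) < u 0 < u 1 < u 2 < b 0 < ⋯ < b (l-1)` (with respect to
`φ`) such that `u 0 u 1` and `u 0 u 2` are edges of `G` and no other pair among these
vertices is adjacent. -/
def J16klFree {V : Type*} (G : SimpleGraph V) (φ : V → ℝ) (k l : ℕ) : Prop :=
  ¬ ∃ (a : Fin k → V) (u : Fin 3 → V) (b : Fin l → V),
      (∀ i j : Fin k, i < j → φ (a i) < φ (a j)) ∧
      (∀ i j : Fin 3, i < j → φ (u i) < φ (u j)) ∧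
      (∀ i j : Fin l, i < j → φ (b i) < φ (b j)) ∧
      (∀ (i : Fin k) (j : Fin 3), φ (a i) < φ (u j)) ∧
      (∀ (i : Fin 3) (j : Fin l), φ (u i) < φ (b j)) ∧
      G.Adj (u 0) (u 1) ∧ G.Adj (u 0) (u 2) ∧ ¬ G.Adj (u 1) (u 2) ∧
      (∀ i j : Fin k, ¬ G.Adj (a i) (a j)) ∧
      (∀ i j : Fin l, ¬ G.Adj (b i) (b j)) ∧
      (∀ (i : Fin k) (j : Fin 3), ¬ G.Adj (a i) (u j)) ∧
      (∀ (i : Fin k) (j : Fin l), ¬ G.Adj (a i) (b j)) ∧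
      (∀ (i : Fin 3) (j : Fin l), ¬ G.Adj (u i) (b j))

/-- A graph is chordal if it contains no induced cycle of length at least 4. -/
def Chordal {V : Type*} (G : SimpleGraph V) : Prop :=
  ∀ n : ℕ, 4 ≤ n →
    ¬ ∃ f : ZMod n → V, Function.Injective f ∧
        ∀ i j : ZMod n, G.Adj (f i) (f j) ↔ (j = i + 1 ∨ i = j + 1)

/-!
Call `v ∈ X` a cherry centre if its (at most two) forward neighbours in `X` are nonadjacent.
Let `B` be the last `3l + 3` vertices of `X` and take a maximum family of pairwise disjoint
cherries (centre plus forward neighbours) avoiding `B`. If it has more than `k` members, the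
first `k` centres, the last cherry and `l` independent vertices of `B` not adjacent to that
cherry form a `J₁₆(k, l)`; such vertices exist because removing the at most four forward
neighbours of the leaves from `B` leaves at least `3l - 1` vertices of forward degree at most
two, enough for a greedy independent set of size `l`. Otherwise `B` and the cherries make up a
set `S` of at most `3k + 3l + 6` vertices, and by maximality `φ` is a perfect elimination
ordering of `G[X \ S]`, which is therefore chordal. Fixing the colours on `S` in all possible
ways gives the family.
-/

open Finset

section Ordering

variable {V : Type*} {φ : V → ℝ}

theorem exists_strictMono_comp_of_le_card (hφ : Function.Injective φ) {Q : Finset V} {n : ℕ}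
    (hn : n ≤ Q.card) : ∃ g : Fin n → V, (∀ i, g i ∈ Q) ∧ StrictMono (φ ∘ g) := by
  classical
  have hcard : (Q.image φ).card = Q.card := card_image_of_injective Q hφ
  have hmem : ∀ i : Fin n, ∃ v ∈ Q, φ v = (Q.image φ).orderEmbOfFin hcard (Fin.castLE hn i) :=
    fun i => mem_image.1 (orderEmbOfFin_mem _ _ _)
  choose g hgQ hgφ using hmem
  refine ⟨g, hgQ, fun i j hij => ?_⟩
  simp only [Function.comp_apply, hgφ]
  exact ((Q.image φ).orderEmbOfFin hcard).strictMono (Fin.strictMono_castLE hn hij)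

theorem exists_subset_card_eq_forall_lt (hφ : Function.Injective φ) [DecidableEq V] :
    ∀ (n : ℕ) (X : Finset V), n ≤ X.card →
      ∃ B ⊆ X, B.card = n ∧ ∀ x ∈ X \ B, ∀ b ∈ B, φ x < φ b
  | 0, X, _ => ⟨∅, empty_subset _, card_empty, by simp⟩
  | n + 1, X, hn => by
    obtain ⟨m, hm, hmax⟩ := X.exists_max_image φ (card_pos.1 (by omega))
    obtain ⟨B, hBX, hBcard, hBtop⟩ :=
      exists_subset_card_eq_forall_lt hφ n (X.erase m) (by rw [card_erase_of_mem hm]; omega)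
    have hmB : m ∉ B := fun h => (mem_erase.1 (hBX h)).1 rfl
    refine ⟨insert m B, insert_subset hm (hBX.trans (erase_subset _ _)),
      by rw [card_insert_of_notMem hmB, hBcard], fun x hx b hb => ?_⟩
    obtain ⟨hxX, hxmB⟩ := mem_sdiff.1 hx
    rw [mem_insert, not_or] at hxmB
    rcases mem_insert.1 hb with rfl | hb
    · exact (hmax x hxX).lt_of_ne fun h => hxmB.1 (hφ h)
    · exact hBtop x (mem_sdiff.2 ⟨mem_erase.2 ⟨hxmB.1, hxX⟩, hxmB.2⟩) b hb

end Ordering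

theorem not_j16klFree_of_forall {V : Type*} {G : SimpleGraph V} {φ : V → ℝ} {k l : ℕ}
    {a : Fin k → V} {b : Fin l → V} {p x y : V}
    (ha : StrictMono (φ ∘ a)) (hb : StrictMono (φ ∘ b))
    (hap : ∀ i, φ (a i) < φ p) (hpx : φ p < φ x) (hxy : φ x < φ y) (hyb : ∀ j, φ y < φ (b j))
    (hadjx : G.Adj p x) (hadjy : G.Adj p y) (hnxy : ¬ G.Adj x y)
    (haa : ∀ i j, ¬ G.Adj (a i) (a j)) (hbb : ∀ i j, ¬ G.Adj (b i) (b j))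
    (hau : ∀ i, ¬ G.Adj (a i) p ∧ ¬ G.Adj (a i) x ∧ ¬ G.Adj (a i) y)
    (hab : ∀ i j, ¬ G.Adj (a i) (b j))
    (hub : ∀ j, ¬ G.Adj p (b j) ∧ ¬ G.Adj x (b j) ∧ ¬ G.Adj y (b j)) :
    ¬ J16klFree G φ k l := by
  have hu : StrictMono (φ ∘ ![p, x, y]) := by
    rw [← FinVec.map_eq]
    exact (strictMono_vecEmpty.vecCons hxy).vecCons hpx
  refine not_not_intro ⟨a, ![p, x, y], b, ha, hu, hb,
    fun i j => (hap i).trans_le (hu.monotone (Fin.zero_le j)),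
    fun i j => (hu.monotone (Fin.le_last i)).trans_lt (hyb j),
    hadjx, hadjy, hnxy, haa, hbb, fun i j => ?_, hab, fun i j => ?_⟩
  · fin_cases j
    exacts [(hau i).1, (hau i).2.1, (hau i).2.2]
  · fin_cases i
    exacts [(hub j).1, (hub j).2.1, (hub j).2.2]

namespace SimpleGraph

variable {V : Type*} {G : SimpleGraph V} {φ : V → ℝ}

def IsPerfectEliminationOn (G : SimpleGraph V) (φ : V → ℝ) (Y : Set V) : Prop :=
  ∀ v ∈ Y, G.IsClique {u ∈ Y | G.Adj v u ∧ φ v < φ u}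

theorem IsPerfectEliminationOn.mono {Y Z : Set V} (h : G.IsPerfectEliminationOn φ Y)
    (hZY : Z ⊆ Y) : G.IsPerfectEliminationOn φ Z := fun v hv =>
  (h v (hZY hv)).subset fun _ hu => Set.mem_sep (hZY hu.1) hu.2

/-- One direction of the Fulkerson–Gross theorem: the `φ`-least vertex of an induced cycle
has two nonadjacent forward neighbours on it. -/
theorem IsPerfectEliminationOn.chordal_induce (hφ : Function.Injective φ) {Y : Set V}
    (h : G.IsPerfectEliminationOn φ Y) : Chordal (G.induce Y) := by
  rintro n hn ⟨f, hf, hadj⟩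
  have : NeZero n := ⟨by omega⟩
  have hne : ∀ m : ℕ, 0 < m → m < n → (m : ZMod n) ≠ 0 := fun m hm hmn hm0 =>
    absurd (Nat.le_of_dvd hm ((ZMod.natCast_eq_zero_iff m n).1 hm0)) (by omega)
  have h1 : (1 : ZMod n) ≠ 0 := by exact_mod_cast hne 1 (by omega) (by omega)
  have h2 : (2 : ZMod n) ≠ 0 := by exact_mod_cast hne 2 (by omega) (by omega)
  have h3 : (3 : ZMod n) ≠ 0 := by exact_mod_cast hne 3 (by omega) (by omega)
  obtain ⟨i, -, hi⟩ := univ.exists_min_image (fun i => φ (f i)) univ_nonempty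
  have hlt : ∀ j, j ≠ i → φ (f i) < φ (f j) := fun j hj =>
    (hi j (mem_univ j)).lt_of_ne fun hφij => hj (hf (Subtype.ext (hφ hφij))).symm
  have hnext : G.Adj (f i) (f (i + 1)) := (hadj i (i + 1)).2 (Or.inl rfl)
  have hprev : G.Adj (f i) (f (i - 1)) := (hadj i (i - 1)).2 (Or.inr (by ring))
  have hnot : ¬ G.Adj (f (i + 1)) (f (i - 1)) := by
    rw [← induce_adj, hadj]
    rintro (hc | hc)
    · exact h3 (by linear_combination -hc)
    · exact h1 (by linear_combination hc)
  refine hnot (h (f i) (f i).2 ⟨(f (i + 1)).2, hnext, hlt _ ?_⟩ ⟨(f (i - 1)).2, hprev, hlt _ ?_⟩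
    fun hc => h2 (by linear_combination hf (Subtype.ext hc)))
  · exact fun hc => h1 (by linear_combination hc)
  · exact fun hc => h1 (by linear_combination -hc)

variable [DecidableRel G.Adj]

noncomputable def fwdNbhd (G : SimpleGraph V) [DecidableRel G.Adj] (φ : V → ℝ) (X : Finset V)
    (v : V) : Finset V :=
  X.filter fun u => G.Adj v u ∧ φ v < φ u

/-- When `v` has at most two forward neighbours, this says they are nonadjacent vertices
`x`, `y`, so that `x – v – y` can serve as the middle part of a `J₁₆(k, l)`. -/
def IsCherry (G : SimpleGraph V) [DecidableRel G.Adj] (φ : V → ℝ) (X : Finset V) (v : V) :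
    Prop :=
  v ∈ X ∧ ¬ G.IsClique (G.fwdNbhd φ X v : Set V)

section fwdNbhd

variable {X Y : Finset V} {u v : V}

@[simp]
theorem mem_fwdNbhd : u ∈ G.fwdNbhd φ X v ↔ u ∈ X ∧ G.Adj v u ∧ φ v < φ u :=
  mem_filter

theorem not_adj_of_notMem_fwdNbhd (hu : u ∈ X) (hvu : φ v < φ u) (hu' : u ∉ G.fwdNbhd φ X v) :
    ¬ G.Adj v u := fun h => hu' (mem_fwdNbhd.2 ⟨hu, h, hvu⟩)

theorem fwdNbhd_mono (h : X ⊆ Y) : G.fwdNbhd φ X v ⊆ G.fwdNbhd φ Y v :=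
  filter_subset_filter _ h

theorem isPerfectEliminationOn_coe_iff :
    G.IsPerfectEliminationOn φ X ↔ ∀ v ∈ X, G.IsClique (G.fwdNbhd φ X v : Set V) := by
  simp only [IsPerfectEliminationOn, fwdNbhd, coe_filter, mem_coe]

theorem IsCherry.exists_lt (hφ : Function.Injective φ) (hv : G.IsCherry φ X v) :
    ∃ x ∈ G.fwdNbhd φ X v, ∃ y ∈ G.fwdNbhd φ X v, φ x < φ y ∧ ¬ G.Adj x y := by
  have h := hv.2
  simp only [IsClique, Set.Pairwise, mem_coe, not_forall] at h
  obtain ⟨x, hx, y, hy, hxy, hnadj⟩ := h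
  rcases (hφ.ne hxy).lt_or_gt with h | h
  · exact ⟨x, hx, y, hy, h, hnadj⟩
  · exact ⟨y, hy, x, hx, h, fun h' => hnadj h'.symm⟩

end fwdNbhd

variable [DecidableEq V]

/-- Greedy choice from the `φ`-least end: taking the least vertex discards at most `d + 1`
vertices (itself and its forward neighbours, which are all its neighbours). -/
theorem exists_isIndepSet_of_card_fwdNbhd_le (hφ : Function.Injective φ) {d : ℕ} :
    ∀ (n : ℕ) (P : Finset V), (∀ v ∈ P, (G.fwdNbhd φ P v).card ≤ d) →
      (d + 1) * n ≤ P.card + d → ∃ Q ⊆ P, Q.card = n ∧ G.IsIndepSet (Q : Set V)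
  | 0, P, _, _ => ⟨∅, empty_subset _, card_empty, by simp⟩
  | n + 1, P, hdeg, hcard => by
    have hsucc : (d + 1) * (n + 1) = (d + 1) * n + d + 1 := by ring
    obtain ⟨p, hp, hmin⟩ := P.exists_min_image φ (card_pos.1 (by omega))
    set P' := P \ insert p (G.fwdNbhd φ P p)
    have hP'P : P' ⊆ P := sdiff_subset
    have hP'card : (d + 1) * n ≤ P'.card + d := by
      have : P.card - (insert p (G.fwdNbhd φ P p)).card ≤ P'.card := le_card_sdiff _ _
      have := (card_insert_le p (G.fwdNbhd φ P p)).trans (Nat.succ_le_succ (hdeg p hp))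
      omega
    obtain ⟨Q, hQP', hQcard, hQ⟩ := exists_isIndepSet_of_card_fwdNbhd_le hφ n P'
      (fun v hv => (card_le_card (fwdNbhd_mono hP'P)).trans (hdeg v (hP'P hv))) hP'card
    have hnadj : ∀ q ∈ Q, ¬ G.Adj p q := by
      intro q hq hpq
      obtain ⟨hqP, hq⟩ := mem_sdiff.1 (hQP' hq)
      have hpq' : p ≠ q := fun h => hq (h ▸ mem_insert_self p _)
      exact hq (mem_insert_of_mem (mem_fwdNbhd.2
        ⟨hqP, hpq, (hmin q hqP).lt_of_ne fun h => hpq' (hφ h)⟩))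
    have hpQ : p ∉ Q := fun h => (mem_sdiff.1 (hQP' h)).2 (mem_insert_self p _)
    refine ⟨insert p Q, insert_subset hp (hQP'.trans hP'P),
      by rw [card_insert_of_notMem hpQ, hQcard], ?_⟩
    rw [coe_insert]
    exact hQ.insert fun q hq _ => ⟨hnadj q hq, fun h => hnadj q hq h.symm⟩

theorem exists_strictMono_of_card_fwdNbhd_le (hφ : Function.Injective φ) {d n : ℕ}
    {P : Finset V} (hdeg : ∀ v ∈ P, (G.fwdNbhd φ P v).card ≤ d)
    (hP : (d + 1) * n ≤ P.card + d) :
    ∃ b : Fin n → V, StrictMono (φ ∘ b) ∧ (∀ j, b j ∈ P) ∧ ∀ i j, ¬ G.Adj (b i) (b j) := by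
  obtain ⟨Q, hQP, hQcard, hQ⟩ := exists_isIndepSet_of_card_fwdNbhd_le hφ n P hdeg hP
  obtain ⟨b, hbQ, hb⟩ := exists_strictMono_comp_of_le_card hφ hQcard.ge
  refine ⟨b, hb, fun j => hQP (hbQ j), fun i j => ?_⟩
  obtain rfl | hij := eq_or_ne i j
  · exact G.irrefl
  · exact hQ (hbQ i) (hbQ j) (hb.injective.of_comp.ne hij)

noncomputable def closedFwdNbhd (G : SimpleGraph V) [DecidableRel G.Adj] (φ : V → ℝ)
    (X : Finset V) (v : V) : Finset V :=
  insert v (G.fwdNbhd φ X v)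

def IsCherryPacking (G : SimpleGraph V) [DecidableRel G.Adj] (φ : V → ℝ) (X B F : Finset V) :
    Prop :=
  (∀ v ∈ F, G.IsCherry φ X v ∧ Disjoint (G.closedFwdNbhd φ X v) B) ∧
    (F : Set V).PairwiseDisjoint (G.closedFwdNbhd φ X)

section CherryPacking

variable {X B F : Finset V}

theorem mem_closedFwdNbhd_self {v : V} : v ∈ G.closedFwdNbhd φ X v :=
  mem_insert_self v _

theorem closedFwdNbhd_subset {v : V} (hv : v ∈ X) : G.closedFwdNbhd φ X v ⊆ X :=
  insert_subset hv (filter_subset _ _)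

theorem le_of_mem_closedFwdNbhd {v z : V} (hz : z ∈ G.closedFwdNbhd φ X v) : φ v ≤ φ z := by
  rcases mem_insert.1 hz with rfl | hz
  · exact le_rfl
  · exact (mem_fwdNbhd.1 hz).2.2.le

theorem not_adj_of_notMem_closedFwdNbhd {v z : V} (hz : z ∈ X) (hvz : φ v < φ z)
    (hz' : z ∉ G.closedFwdNbhd φ X v) : ¬ G.Adj v z :=
  not_adj_of_notMem_fwdNbhd hz hvz fun h => hz' (mem_insert_of_mem h)

theorem IsCherryPacking.subset (hF : G.IsCherryPacking φ X B F) : F ⊆ X :=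
  fun v hv => (hF.1 v hv).1.1

theorem IsCherryPacking.not_adj_of_mem_closedFwdNbhd (hF : G.IsCherryPacking φ X B F)
    {v w z : V} (hv : v ∈ F) (hw : w ∈ F) (hvw : v ≠ w) (hz : z ∈ G.closedFwdNbhd φ X w)
    (hvz : φ v < φ z) : ¬ G.Adj v z :=
  not_adj_of_notMem_closedFwdNbhd (closedFwdNbhd_subset (hF.subset hw) hz) hvz
    fun h => Finset.disjoint_left.1 (hF.2 hv hw hvw) h hz

theorem IsCherryPacking.not_adj_of_mem_right (hF : G.IsCherryPacking φ X B F) (hBX : B ⊆ X)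
    {v z : V} (hv : v ∈ F) (hz : z ∈ B) (hvz : φ v < φ z) : ¬ G.Adj v z :=
  not_adj_of_notMem_closedFwdNbhd (hBX hz) hvz fun h => Finset.disjoint_left.1 (hF.1 v hv).2 h hz

theorem exists_isCherryPacking_forall_card_le (G : SimpleGraph V) [DecidableRel G.Adj]
    (φ : V → ℝ) (X B : Finset V) :
    ∃ F, G.IsCherryPacking φ X B F ∧ ∀ F', G.IsCherryPacking φ X B F' → F'.card ≤ F.card := by
  classical
  have hempty : G.IsCherryPacking φ X B ∅ := ⟨by simp, by simp⟩
  obtain ⟨F, hF, hmax⟩ := (X.powerset.filter (G.IsCherryPacking φ X B)).exists_max_image card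
    ⟨∅, mem_filter.2 ⟨empty_mem_powerset X, hempty⟩⟩
  exact ⟨F, (mem_filter.1 hF).2, fun F' hF' =>
    hmax F' (mem_filter.2 ⟨mem_powerset.2 hF'.subset, hF'⟩)⟩

variable (hdeg : ∀ v ∈ X, (G.fwdNbhd φ X v).card ≤ 2)
include hdeg

theorem IsCherryPacking.card_biUnion_le (hF : G.IsCherryPacking φ X B F) :
    (F.biUnion (G.closedFwdNbhd φ X)).card ≤ 3 * F.card :=
  calc (F.biUnion (G.closedFwdNbhd φ X)).card
      ≤ ∑ v ∈ F, (G.closedFwdNbhd φ X v).card := Finset.card_biUnion_le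
    _ ≤ ∑ _v ∈ F, 3 := sum_le_sum fun v hv =>
      (card_insert_le _ _).trans (Nat.succ_le_succ (hdeg v (hF.subset hv)))
    _ = 3 * F.card := by rw [sum_const, smul_eq_mul, mul_comm]

/-- A violation of perfect elimination outside the cherries of a maximum packing would centre
a further cherry: having at most two forward neighbours, its forward neighbours outside are
all its forward neighbours. -/
theorem IsCherryPacking.isPerfectEliminationOn_sdiff (hF : G.IsCherryPacking φ X B F)
    (hmax : ∀ F', G.IsCherryPacking φ X B F' → F'.card ≤ F.card) :
    G.IsPerfectEliminationOn φ ↑(X \ (B ∪ F.biUnion (G.closedFwdNbhd φ X))) := by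
  set S := B ∪ F.biUnion (G.closedFwdNbhd φ X)
  rw [isPerfectEliminationOn_coe_iff]
  intro v hv
  by_contra hnc
  obtain ⟨hvX, hvS⟩ := mem_sdiff.1 hv
  have htwo : 2 ≤ (G.fwdNbhd φ (X \ S) v).card := by
    by_contra! h
    exact hnc (IsClique.of_subsingleton fun x hx y hy => card_le_one.1 (by omega) x hx y hy)
  have heq : G.fwdNbhd φ (X \ S) v = G.fwdNbhd φ X v :=
    eq_of_subset_of_card_le (fwdNbhd_mono sdiff_subset) (by have := hdeg v hvX; omega)
  have hclosed : Disjoint (G.closedFwdNbhd φ X v) S := by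
    refine Finset.disjoint_left.2 fun z hz => ?_
    rcases mem_insert.1 hz with rfl | hz
    · exact hvS
    · exact (mem_sdiff.1 (mem_fwdNbhd.1 (heq ▸ hz)).1).2
  obtain ⟨hclosedB, hclosedF⟩ := Finset.disjoint_union_right.1 hclosed
  have hvF : v ∉ F := fun h => Finset.disjoint_left.1 hclosedF mem_closedFwdNbhd_self
    (mem_biUnion.2 ⟨v, h, mem_closedFwdNbhd_self⟩)
  have hinsert : G.IsCherryPacking φ X B (insert v F) := by
    refine ⟨fun w hw => ?_, ?_⟩
    · rcases mem_insert.1 hw with rfl | hw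
      · exact ⟨⟨hvX, heq ▸ hnc⟩, hclosedB⟩
      · exact hF.1 w hw
    · rw [coe_insert]
      exact hF.2.insert fun w hw _ => hclosedF.mono_right (subset_biUnion_of_mem _ hw)
  have := hmax _ hinsert
  rw [card_insert_of_notMem hvF] at this
  omega

theorem exists_strictMono_mem_sdiff_fwdNbhd (hφ : Function.Injective φ) {l : ℕ} (hBX : B ⊆ X)
    (hBcard : 3 * l + 3 ≤ B.card) {x y : V} (hx : x ∈ X) (hy : y ∈ X) :
    ∃ b : Fin l → V, StrictMono (φ ∘ b) ∧ (∀ j, b j ∈ B \ (G.fwdNbhd φ X x ∪ G.fwdNbhd φ X y)) ∧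
      ∀ i j, ¬ G.Adj (b i) (b j) := by
  set P := B \ (G.fwdNbhd φ X x ∪ G.fwdNbhd φ X y)
  have hPX : P ⊆ X := sdiff_subset.trans hBX
  have hPcard : 3 * l ≤ P.card + 2 := by
    have : B.card - (G.fwdNbhd φ X x ∪ G.fwdNbhd φ X y).card ≤ P.card := le_card_sdiff _ _
    have := card_union_le (G.fwdNbhd φ X x) (G.fwdNbhd φ X y)
    have := hdeg x hx
    have := hdeg y hy
    omega
  exact exists_strictMono_of_card_fwdNbhd_le (d := 2) hφ
    (fun v hv => (card_le_card (fwdNbhd_mono hPX)).trans (hdeg v (hPX hv))) hPcard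

theorem IsCherryPacking.not_j16klFree (hφ : Function.Injective φ) {k l : ℕ} (hBX : B ⊆ X)
    (hBcard : 3 * l + 3 ≤ B.card) (hBtop : ∀ x ∈ X \ B, ∀ b ∈ B, φ x < φ b)
    (hF : G.IsCherryPacking φ X B F) (hk : k < F.card) : ¬ J16klFree G φ k l := by
  obtain ⟨g, hgF, hg⟩ := exists_strictMono_comp_of_le_card hφ hk
  have hgne : ∀ i j, i ≠ j → g i ≠ g j := fun i j => hg.injective.of_comp.ne
  set p := g (Fin.last k)
  obtain ⟨x, hx, y, hy, hxy, hnxy⟩ := (hF.1 p (hgF _)).1.exists_lt hφ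
  obtain ⟨hxX, hadjx, hpx⟩ := mem_fwdNbhd.1 hx
  obtain ⟨hyX, hadjy, -⟩ := mem_fwdNbhd.1 hy
  have hxp : x ∈ G.closedFwdNbhd φ X p := mem_insert_of_mem hx
  have hyp : y ∈ G.closedFwdNbhd φ X p := mem_insert_of_mem hy
  obtain ⟨b, hb, hbP, hbb⟩ := exists_strictMono_mem_sdiff_fwdNbhd hdeg hφ hBX hBcard hxX hyX
  have hbB : ∀ j, b j ∈ B := fun j => sdiff_subset (hbP j)
  have hlt_b : ∀ z ∈ G.closedFwdNbhd φ X p, ∀ j, φ z < φ (b j) := fun z hz j =>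
    hBtop z (mem_sdiff.2 ⟨closedFwdNbhd_subset (hF.subset (hgF _)) hz,
      Finset.disjoint_left.1 (hF.1 p (hgF _)).2 hz⟩) (b j) (hbB j)
  have hap : ∀ i : Fin k, φ (g i.castSucc) < φ p := fun i => hg (Fin.castSucc_lt_last i)
  have hau : ∀ i : Fin k, ∀ z ∈ G.closedFwdNbhd φ X p, ¬ G.Adj (g i.castSucc) z :=
    fun i z hz => hF.not_adj_of_mem_closedFwdNbhd (hgF _) (hgF _)
      (hgne _ _ (Fin.castSucc_lt_last i).ne) hz ((hap i).trans_le (le_of_mem_closedFwdNbhd hz))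
  have hgg : ∀ i j, i < j → ¬ G.Adj (g i) (g j) := fun i j hij =>
    hF.not_adj_of_mem_closedFwdNbhd (hgF i) (hgF j) (hgne i j hij.ne) mem_closedFwdNbhd_self
      (hg hij)
  refine not_j16klFree_of_forall (a := g ∘ Fin.castSucc) (p := p) (hg.comp Fin.strictMono_castSucc)
    hb hap hpx hxy (hlt_b y hyp) hadjx hadjy hnxy (fun i j => ?_) hbb
    (fun i => ⟨hau i p mem_closedFwdNbhd_self, hau i x hxp, hau i y hyp⟩)
    (fun i j => hF.not_adj_of_mem_right hBX (hgF _) (hbB j)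
      ((hap i).trans (hlt_b p mem_closedFwdNbhd_self j)))
    fun j => ⟨hF.not_adj_of_mem_right hBX (hgF _) (hbB j) (hlt_b p mem_closedFwdNbhd_self j),
      not_adj_of_notMem_fwdNbhd (hBX (hbB j)) (hlt_b x hxp j)
        fun h => (mem_sdiff.1 (hbP j)).2 (mem_union_left _ h),
      not_adj_of_notMem_fwdNbhd (hBX (hbB j)) (hlt_b y hyp j)
        fun h => (mem_sdiff.1 (hbP j)).2 (mem_union_right _ h)⟩
  rcases lt_trichotomy i j with hij | rfl | hij
  · exact hgg _ _ (Fin.castSucc_lt_castSucc_iff.2 hij)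
  · exact G.irrefl
  · exact fun h => hgg _ _ (Fin.castSucc_lt_castSucc_iff.2 hij) h.symm

end CherryPacking

theorem exists_card_le_isPerfectEliminationOn_sdiff (hφ : Function.Injective φ) {k l : ℕ}
    (hfree : J16klFree G φ k l) {X : Finset V} (hdeg : ∀ v ∈ X, (G.fwdNbhd φ X v).card ≤ 2) :
    ∃ S : Finset V, S.card ≤ 3 * k + 3 * l + 6 ∧ G.IsPerfectEliminationOn φ ↑(X \ S) := by
  by_cases hX : X.card < 3 * l + 3
  · exact ⟨X, by omega, by simp [IsPerfectEliminationOn]⟩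
  obtain ⟨B, hBX, hBcard, hBtop⟩ := exists_subset_card_eq_forall_lt hφ (3 * l + 3) X (by omega)
  obtain ⟨F, hF, hmax⟩ := exists_isCherryPacking_forall_card_le G φ X B
  have hFk : F.card ≤ k :=
    not_lt.1 fun hk => hF.not_j16klFree hdeg hφ hBX hBcard.ge hBtop hk hfree
  refine ⟨B ∪ F.biUnion (G.closedFwdNbhd φ X), ?_, hF.isPerfectEliminationOn_sdiff hdeg hmax⟩
  have := hF.card_biUnion_le hdeg
  have := card_union_le B (F.biUnion (G.closedFwdNbhd φ X))
  omega

end SimpleGraph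

theorem exists_covering_family_pinned_on {V α : Type*} [Fintype α] (L : V → Finset α)
    (S : Finset V) :
    ∃ 𝓛 : Finset (V → Finset α), 𝓛.card ≤ Fintype.card α ^ S.card ∧
      (∀ L' ∈ 𝓛, ∀ v, L' v ⊆ L v ∧ (v ∈ S → (L' v).card ≤ 1)) ∧
      ∀ c : V → α, (∀ v, c v ∈ L v) → ∃ L' ∈ 𝓛, ∀ v, c v ∈ L' v := by
  classical
  let pin : (S → α) → V → Finset α := fun g v => if h : v ∈ S then L v ∩ {g ⟨v, h⟩} else L v
  refine ⟨univ.image pin, ?_, ?_, fun c hc =>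
    ⟨pin fun s => c s, mem_image_of_mem _ (mem_univ _), ?_⟩⟩
  · refine card_image_le.trans ?_
    rw [card_univ, Fintype.card_fun, Fintype.card_coe]
  · rintro _ hL' v
    obtain ⟨g, -, rfl⟩ := mem_image.1 hL'
    by_cases hv : v ∈ S
    · simp only [pin, dif_pos hv]
      exact ⟨inter_subset_left, fun _ =>
        (card_le_card inter_subset_right).trans (card_singleton _).le⟩
    · simp only [pin, dif_neg hv]
      exact ⟨subset_rfl, fun h => absurd h hv⟩
  · intro v
    by_cases hv : v ∈ S
    · simp only [pin, dif_pos hv]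
      exact mem_inter.2 ⟨hc v, mem_singleton_self _⟩
    · simp only [pin, dif_neg hv]
      exact hc v

theorem exists_profile_chordal
    {V : Type*} [Fintype V] (k l : ℕ) (G : SimpleGraph V) (φ : V → ℝ)
    (hφ : Function.Injective φ) (hfree : J16klFree G φ k l)
    (L : V → Finset (Fin 3))
    (hfwd : ∀ v : V, 2 ≤ (L v).card →
      ({u : V | G.Adj v u ∧ φ v < φ u ∧ 2 ≤ (L u).card} : Set V).ncard ≤ 2) :
    ∃ 𝓛 : Finset (V → Finset (Fin 3)),
      𝓛.card ≤ 3 ^ (3 * k + 3 * l + 6) ∧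
      (∀ L' ∈ 𝓛, ∀ v : V, L' v ⊆ L v) ∧
      (∀ L' ∈ 𝓛, Chordal (G.induce {v : V | 2 ≤ (L' v).card})) ∧
      (∀ c : V → Fin 3, (∀ u v, G.Adj u v → c u ≠ c v) → (∀ v, c v ∈ L v) →
        ∃ L' ∈ 𝓛, ∀ v, c v ∈ L' v) := by
  classical
  set X : Finset V := univ.filter fun v => 2 ≤ (L v).card
  have hdeg : ∀ v ∈ X, (G.fwdNbhd φ X v).card ≤ 2 := fun v hv => by
    have hset : {u : V | G.Adj v u ∧ φ v < φ u ∧ 2 ≤ (L u).card} = ↑(G.fwdNbhd φ X v) := by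
      ext u
      simp only [X, mem_coe, SimpleGraph.mem_fwdNbhd, mem_filter, mem_univ, true_and,
        Set.mem_ofPred_eq]
      tauto
    simpa [hset] using hfwd v (mem_filter.1 hv).2
  obtain ⟨S, hS, hpeo⟩ := G.exists_card_le_isPerfectEliminationOn_sdiff hφ hfree hdeg
  obtain ⟨𝓛, hcard, hpin, hcover⟩ := exists_covering_family_pinned_on L S
  refine ⟨𝓛, hcard.trans ?_, fun L' hL' v => (hpin L' hL' v).1, fun L' hL' => ?_,
    fun c _ hc => hcover c hc⟩
  · simpa using Nat.pow_le_pow_right (by norm_num) hS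
  refine (hpeo.mono fun v (hv : 2 ≤ (L' v).card) => ?_).chordal_induce hφ
  obtain ⟨hsub, hpinned⟩ := hpin L' hL' v
  simp only [X, coe_sdiff, coe_filter, Set.mem_sdiff, Set.mem_ofPred_eq, mem_univ, true_and,
    mem_coe]
  exact ⟨hv.trans (card_le_card hsub), fun h => absurd (hpinned h) (by omega)⟩
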